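/- Let 0 < β ≤ 1/2 and 0 ≤ α ≤ β/2, and let A = {a_1 < a_2 < ...} and B = {b_1 < b_2 < ...} be two infinite subsets of ℕ such that (1) a_i − b_i = o(a_i^{β−α}) as i → ∞; (2) A(n) − B(n) = O(n^{α}); and (3) there is a constant c > 0 with A(n) ≤ c·n^{β} and B(n) ≤ c·n^{β} for all n ∈ ℕ. Then Σ_{n ≤ x} (A(n) − B(n))^2 = o(x^{2β}) as x → ∞. -/

import Mathlib

/-!
Write `D(n) = A(n) - B(n)`. The index `i` contributes to `|D(n)|` exactly when `n` lies in
`[min(a_i, b_i), max(a_i, b_i))`, so double counting gives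
`∑_{n ≤ x} |D(n)| ≤ ∑_{i < max(A(x), B(x))} |a_i - b_i|`. For large `i`,
`|a_i - b_i| ≤ δ a_i^(β-α)`, which forces `a_i ≤ 2x` whenever `min(a_i, b_i) ≤ x`; there are
at most `c x^β` such indices, hence `∑_{n ≤ x} |D(n)| = o(x^(2β-α))`. Finally
`∑_{n ≤ x} D(n)² ≤ (max_{n ≤ x} |D(n)|) · ∑_{n ≤ x} |D(n)| = O(x^α) · o(x^(2β-α))`.
-/

open Filter Asymptotics

/-- The counting function `A(n) = |{a ∈ A : a ≤ n}|`. -/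
noncomputable def countFn (A : Set ℕ) (n : ℕ) : ℕ := (A ∩ Set.Iic n).ncard

open Finset Topology

section Counting

variable {A B : Set ℕ}

theorem countFn_eq_count [DecidablePred (· ∈ A)] (n : ℕ) :
    countFn A n = Nat.count (· ∈ A) (n + 1) := by
  rw [countFn, Nat.count_eq_card_filter_range, ← Set.ncard_coe_finset]
  congr 1
  ext k
  simp [and_comm]

theorem nth_le_iff_lt_countFn (hA : A.Infinite) {i n : ℕ} :
    Nat.nth (· ∈ A) i ≤ n ↔ i < countFn A n := by
  classical
  rw [countFn_eq_count, Nat.lt_nth_iff_count_lt (p := (· ∈ A)) hA, Nat.lt_succ_iff]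

theorem countFn_mono (A : Set ℕ) : Monotone (countFn A) := fun _ _ h =>
  Set.ncard_le_ncard (Set.inter_subset_inter_right _ (Set.Iic_subset_Iic.2 h))
    ((Set.finite_Iic _).inter_of_right _)

theorem abs_natCast_sub_natCast (p q : ℕ) :
    |(p : ℝ) - q| = ((max p q - min p q : ℕ) : ℝ) := by
  rw [Nat.cast_sub (min_le_max), Nat.cast_max, Nat.cast_min, max_sub_min_eq_abs']

theorem filter_mem_Ico_nth_eq_Ico_countFn (hA : A.Infinite) (hB : B.Infinite) {n N : ℕ}
    (hN : max (countFn A n) (countFn B n) ≤ N) :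
    {i ∈ range N | n ∈ Ico (min (Nat.nth (· ∈ A) i) (Nat.nth (· ∈ B) i))
        (max (Nat.nth (· ∈ A) i) (Nat.nth (· ∈ B) i))} =
      Ico (min (countFn A n) (countFn B n)) (max (countFn A n) (countFn B n)) := by
  ext i
  have hai := nth_le_iff_lt_countFn hA (i := i) (n := n)
  have hbi := nth_le_iff_lt_countFn hB (i := i) (n := n)
  simp only [mem_filter, mem_range, mem_Ico, min_le_iff, lt_max_iff]
  omega

theorem sum_abs_countFn_sub_le (hA : A.Infinite) (hB : B.Infinite) (x : ℕ) :
    ∑ n ∈ range (x + 1), |(countFn A n : ℝ) - countFn B n| ≤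
      ∑ i ∈ range (max (countFn A x) (countFn B x)),
        |(Nat.nth (· ∈ A) i : ℝ) - Nat.nth (· ∈ B) i| := by
  set a := Nat.nth (· ∈ A)
  set b := Nat.nth (· ∈ B)
  set N := max (countFn A x) (countFn B x)
  let between (n i : ℕ) : Prop := n ∈ Ico (min (a i) (b i)) (max (a i) (b i))
  have hrow : ∀ n ∈ range (x + 1), #((range N).bipartiteAbove between n) =
      max (countFn A n) (countFn B n) - min (countFn A n) (countFn B n) := by
    intro n hn
    have hnx : n ≤ x := Nat.lt_succ_iff.1 (mem_range.1 hn)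
    rw [bipartiteAbove, filter_mem_Ico_nth_eq_Ico_countFn hA hB
      (max_le_max (countFn_mono A hnx) (countFn_mono B hnx)), Nat.card_Ico]
  have hcol : ∀ i ∈ range N, #((range (x + 1)).bipartiteBelow between i) ≤
      max (a i) (b i) - min (a i) (b i) :=
    fun _ _ => (card_le_card fun _ hn => ((mem_bipartiteBelow between).1 hn).2).trans_eq
      (Nat.card_Ico _ _)
  simp_rw [abs_natCast_sub_natCast]
  rw [← sum_congr rfl fun n hn => congrArg ((↑) : ℕ → ℝ) (hrow n hn)]
  exact_mod_cast (sum_card_bipartiteAbove_eq_sum_card_bipartiteBelow between).trans_le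
    (sum_le_sum hcol)

end Counting

theorem natCast_rpow_le_self {r : ℝ} (hr0 : 0 < r) (hr1 : r ≤ 1) (a : ℕ) :
    (a : ℝ) ^ r ≤ a := by
  rcases Nat.eq_zero_or_pos a with rfl | ha
  · simp [Real.zero_rpow hr0.ne']
  · exact Real.rpow_le_self_of_one_le (by exact_mod_cast ha) hr1

theorem abs_sub_le_mul_two_mul_rpow_of_min_le {δ r : ℝ} (hδ0 : 0 ≤ δ) (hδ : δ ≤ 1 / 2)
    (hr0 : 0 < r) (hr1 : r ≤ 1) {a b x : ℕ} (hab : |(a : ℝ) - b| ≤ δ * (a : ℝ) ^ r)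
    (hx : min a b ≤ x) : |(a : ℝ) - b| ≤ δ * (2 * x : ℝ) ^ r := by
  -- `|a - b| ≤ a / 2` forces `a ≤ 2 * min a b`
  have hhalf : |(a : ℝ) - b| ≤ a / 2 := by
    nlinarith [natCast_rpow_le_self hr0 hr1 a, Real.rpow_nonneg (Nat.cast_nonneg a) r]
  have ha : (a : ℝ) ≤ 2 * x := by
    rcases min_le_iff.1 hx with h | h
    · have : (a : ℝ) ≤ x := by exact_mod_cast h
      linarith [Nat.cast_nonneg (α := ℝ) x]
    · have : (b : ℝ) ≤ x := by exact_mod_cast h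
      linarith [le_abs_self ((a : ℝ) - b)]
  exact hab.trans (by gcongr)

theorem sum_abs_sub_le_of_abs_sub_le_mul_rpow {a b : ℕ → ℕ} {δ r : ℝ} (hδ0 : 0 ≤ δ)
    (hδ : δ ≤ 1 / 2) (hr0 : 0 < r) (hr1 : r ≤ 1) {I : ℕ}
    (hI : ∀ i ≥ I, |(a i : ℝ) - b i| ≤ δ * (a i : ℝ) ^ r) {N x : ℕ}
    (hN : ∀ i < N, min (a i) (b i) ≤ x) :
    ∑ i ∈ range N, |(a i : ℝ) - b i| ≤
      ∑ i ∈ range I, |(a i : ℝ) - b i| + N * (δ * (2 * x : ℝ) ^ r) := by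
  rw [← sum_filter_add_sum_filter_not (range N) (· < I)]
  gcongr
  · exact fun i hi => mem_range.2 (mem_filter.1 hi).2
  · refine (sum_le_card_nsmul _ _ (δ * (2 * x : ℝ) ^ r) fun i hi => ?_).trans ?_
    · obtain ⟨hiN, hiI⟩ := mem_filter.1 hi
      exact abs_sub_le_mul_two_mul_rpow_of_min_le hδ0 hδ hr0 hr1 (hI i (not_lt.1 hiI))
        (hN i (mem_range.1 hiN))
    · rw [nsmul_eq_mul]
      gcongr
      exact_mod_cast (card_filter_le _ _).trans (card_range N).le

theorem isLittleO_of_le_const_add_mul {ι : Type*} {l : Filter ι} {f g : ι → ℝ}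
    (hg : Tendsto g l atTop)
    (h : ∀ᶠ δ in 𝓝[>] (0 : ℝ), ∃ K, ∀ᶠ x in l, ‖f x‖ ≤ K + δ * g x) : f =o[l] g := by
  refine isLittleO_iff.2 fun ε hε => ?_
  obtain ⟨δ, ⟨K, hK⟩, -, hδ⟩ := (h.and (Ioo_mem_nhdsGT (half_pos hε))).exists
  filter_upwards [hK, hg.eventually_ge_atTop (K / (ε / 2)), hg.eventually_ge_atTop 0]
    with x hfx hKg hg0
  rw [Real.norm_of_nonneg hg0]
  rw [div_le_iff₀' (half_pos hε)] at hKg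
  nlinarith

theorem sum_sq_le_mul_sum_abs {ι : Type*} {s : Finset ι} {f : ι → ℝ} {M : ℝ}
    (h : ∀ i ∈ s, |f i| ≤ M) : ∑ i ∈ s, f i ^ 2 ≤ M * ∑ i ∈ s, |f i| := by
  rw [mul_sum]
  refine sum_le_sum fun i hi => ?_
  rw [← sq_abs, sq]
  exact mul_le_mul_of_nonneg_right (h i hi) (abs_nonneg _)

theorem exists_forall_le_mul_rpow_of_isBigO {f : ℕ → ℝ} {α : ℝ} (hα : 0 ≤ α)
    (hf : f =O[atTop] fun n : ℕ => (n : ℝ) ^ α) :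
    ∃ C, ∀ x ≥ 1, ∀ m ≤ x, ‖f m‖ ≤ C * (x : ℝ) ^ α := by
  obtain ⟨C, hC0, hC⟩ := hf.exists_nonneg
  obtain ⟨N, hN⟩ := eventually_atTop.1 hC.bound
  refine ⟨C + ∑ m ∈ range N, ‖f m‖, fun x hx m hm => ?_⟩
  have hx1 : (1 : ℝ) ≤ (x : ℝ) ^ α := Real.one_le_rpow (by exact_mod_cast hx) hα
  have hK : 0 ≤ ∑ m ∈ range N, ‖f m‖ := sum_nonneg fun _ _ => norm_nonneg _
  rcases lt_or_ge m N with hmN | hmN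
  · have := single_le_sum (f := fun m => ‖f m‖) (fun _ _ => norm_nonneg _) (mem_range.2 hmN)
    nlinarith
  · have hmx : (m : ℝ) ^ α ≤ (x : ℝ) ^ α := by gcongr
    have := hN m hmN
    rw [Real.norm_of_nonneg (Real.rpow_nonneg (Nat.cast_nonneg m) α)] at this
    nlinarith

theorem sum_abs_countFn_sub_isLittleO {A B : Set ℕ} (hA : A.Infinite) (hB : B.Infinite)
    {β r c : ℝ} (hβ : 0 ≤ β) (hr0 : 0 < r) (hr1 : r ≤ 1) (hc : 0 < c)
    (hAB : ∀ n : ℕ, (countFn A n : ℝ) ≤ c * (n : ℝ) ^ β ∧ (countFn B n : ℝ) ≤ c * (n : ℝ) ^ β)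
    (hab : (fun i : ℕ => (Nat.nth (· ∈ A) i : ℝ) - (Nat.nth (· ∈ B) i : ℝ))
      =o[atTop] fun i : ℕ => (Nat.nth (· ∈ A) i : ℝ) ^ r) :
    (fun x : ℕ => ∑ n ∈ range (x + 1), |(countFn A n : ℝ) - countFn B n|)
      =o[atTop] fun x : ℕ => (x : ℝ) ^ (β + r) := by
  have hg : Tendsto (fun x : ℕ => c * 2 ^ r * (x : ℝ) ^ (β + r)) atTop atTop :=
    ((tendsto_rpow_atTop (by linarith)).comp tendsto_natCast_atTop_atTop).const_mul_atTop
      (by positivity)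
  refine (isLittleO_of_le_const_add_mul hg ?_).trans_isBigO (isBigO_const_mul_self _ _ _)
  filter_upwards [Ioc_mem_nhdsGT one_half_pos] with δ ⟨hδ0, hδ⟩
  obtain ⟨I, hI⟩ := eventually_atTop.1 (hab.def hδ0)
  refine ⟨∑ i ∈ range I, |(Nat.nth (· ∈ A) i : ℝ) - Nat.nth (· ∈ B) i|,
    Eventually.of_forall fun x => ?_⟩
  have hN : ∀ i < max (countFn A x) (countFn B x),
      min (Nat.nth (· ∈ A) i) (Nat.nth (· ∈ B) i) ≤ x := fun i hi => by
    rcases lt_max_iff.1 hi with h | h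
    · exact min_le_of_left_le ((nth_le_iff_lt_countFn hA).2 h)
    · exact min_le_of_right_le ((nth_le_iff_lt_countFn hB).2 h)
  have hI' : ∀ i ≥ I, |(Nat.nth (· ∈ A) i : ℝ) - Nat.nth (· ∈ B) i| ≤
      δ * (Nat.nth (· ∈ A) i : ℝ) ^ r := fun i hi => by
    simpa [Real.norm_eq_abs, abs_of_nonneg (Real.rpow_nonneg (Nat.cast_nonneg _) r)] using hI i hi
  have hmax : ((max (countFn A x) (countFn B x) : ℕ) : ℝ) ≤ c * (x : ℝ) ^ β := by
    rw [Nat.cast_max]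
    exact max_le (hAB x).1 (hAB x).2
  rw [Real.norm_of_nonneg (sum_nonneg fun _ _ => abs_nonneg _)]
  calc _ ≤ _ := sum_abs_countFn_sub_le hA hB x
    _ ≤ _ := sum_abs_sub_le_of_abs_sub_le_mul_rpow hδ0.le hδ hr0 hr1 hI' hN
    _ ≤ ∑ i ∈ range I, |(Nat.nth (· ∈ A) i : ℝ) - Nat.nth (· ∈ B) i| +
        c * (x : ℝ) ^ β * (δ * (2 * x : ℝ) ^ r) := by gcongr
    _ = _ := by
      rw [Real.mul_rpow zero_le_two (Nat.cast_nonneg x),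
        Real.rpow_add' (Nat.cast_nonneg x) (by linarith)]
      ring

theorem stmt9 (β α : ℝ) (hβ0 : 0 < β) (hβ1 : β ≤ 1 / 2)
    (hα0 : 0 ≤ α) (hα1 : α ≤ β / 2)
    (A B : Set ℕ) (hA : A.Infinite) (hB : B.Infinite)
    (h1 : (fun i : ℕ => (Nat.nth (· ∈ A) i : ℝ) - (Nat.nth (· ∈ B) i : ℝ))
      =o[atTop] fun i : ℕ => (Nat.nth (· ∈ A) i : ℝ) ^ (β - α))
    (h2 : (fun n : ℕ => (countFn A n : ℝ) - (countFn B n : ℝ))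
      =O[atTop] fun n : ℕ => (n : ℝ) ^ α)
    (h3 : ∃ c : ℝ, 0 < c ∧ ∀ n : ℕ,
      (countFn A n : ℝ) ≤ c * (n : ℝ) ^ β ∧ (countFn B n : ℝ) ≤ c * (n : ℝ) ^ β) :
    (fun x : ℕ => ∑ n ∈ Finset.range (x + 1),
        ((countFn A n : ℝ) - (countFn B n : ℝ)) ^ 2)
      =o[atTop] fun x : ℕ => (x : ℝ) ^ (2 * β) := by
  obtain ⟨c, hc, hAB⟩ := h3
  have hsum := sum_abs_countFn_sub_isLittleO hA hB hβ0.le (by linarith) (by linarith) hc hAB h1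
  obtain ⟨C, hC⟩ := exists_forall_le_mul_rpow_of_isBigO hα0 h2
  have hsq : (fun x : ℕ => ∑ n ∈ range (x + 1), ((countFn A n : ℝ) - countFn B n) ^ 2)
      =O[atTop] fun x : ℕ => C * (x : ℝ) ^ α *
        ∑ n ∈ range (x + 1), |(countFn A n : ℝ) - countFn B n| := by
    refine IsBigO.of_bound 1 ((eventually_ge_atTop 1).mono fun x hx => ?_)
    rw [one_mul, Real.norm_of_nonneg (sum_nonneg fun _ _ => sq_nonneg _)]
    exact (sum_sq_le_mul_sum_abs fun n hn => hC x hx n (Nat.lt_succ_iff.1 (mem_range.1 hn))).trans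
      (Real.le_norm_self _)
  refine hsq.trans_isLittleO
    (((isBigO_const_mul_self C _ _).mul_isLittleO hsum).congr_right fun x => ?_)
  rw [← Real.rpow_add' (Nat.cast_nonneg x) (by linarith)]
  ring_nf
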